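/- arXiv:1311.7302 — 5 statements merged into one kernel-verified Lean document; each statement's English description precedes it below -/
import Mathlib

section
/- Let g, N₀, Γ, T, ℓ, λ be positive real numbers. Then there exists a unique w > 0 satisfying the stationarity condition 2^{T/w}·(T·ln 2 / w − 1) = λ·ℓ/(g·N₀·Γ) − 1. -/
open Real

/-- For positive `g, N₀, Γ, T, ℓ, λ`, there is a unique `w > 0` satisfying the
stationarity condition `2^{T/w}·(T·ln 2 / w − 1) = λ·ℓ/(g·N₀·Γ) − 1`. -/
theorem stmt_2 (g N₀ Γ T ℓ lam : ℝ)
    (hg : 0 < g) (hN₀ : 0 < N₀) (hΓ : 0 < Γ) (hT : 0 < T) (hℓ : 0 < ℓ) (hlam : 0 < lam) :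
    ∃! w : ℝ, 0 < w ∧
      (2 : ℝ) ^ (T / w) * (T * Real.log 2 / w - 1) = lam * ℓ / (g * N₀ * Γ) - 1 := by
  set c : ℝ := lam * ℓ / (g * N₀ * Γ) with hc_def
  have hc : 0 < c := by positivity
  have hlog : 0 < Real.log 2 := Real.log_pos (by norm_num)
  set F : ℝ → ℝ := fun y => Real.exp y * (y - 1) with hF
  have hFderiv : ∀ y : ℝ, HasDerivAt F (Real.exp y * y) y := by
    intro y
    have h := (Real.hasDerivAt_exp y).mul ((hasDerivAt_id y).sub_const 1)
    have he : Real.exp y * (y - 1) + Real.exp y * 1 = Real.exp y * y := by ring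
    rw [hF]
    exact he ▸ h
  have hFcont : Continuous F := Real.continuous_exp.mul (continuous_id.sub continuous_const)
  have hmono : StrictMonoOn F (Set.Ici (0:ℝ)) := by
    apply strictMonoOn_of_deriv_pos (convex_Ici 0) hFcont.continuousOn
    intro y hy
    rw [interior_Ici] at hy
    rw [(hFderiv y).deriv]
    exact mul_pos (Real.exp_pos y) hy
  have h0 : F 0 = -1 := by simp [hF]
  have hX : c - 1 ≤ F (c + 1) := by
    have h1 : (1:ℝ) ≤ Real.exp (c + 1) := Real.one_le_exp (by linarith)
    simp only [hF]
    nlinarith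
  have hmem : (c - 1) ∈ Set.Icc (F 0) (F (c + 1)) := by
    constructor
    · rw [h0]; linarith
    · exact hX
  obtain ⟨y₀, hy₀mem, hy₀⟩ :=
    intermediate_value_Icc (by linarith : (0:ℝ) ≤ c + 1) hFcont.continuousOn hmem
  have hy₀pos : 0 < y₀ := by
    rcases lt_or_eq_of_le hy₀mem.1 with h | h
    · exact h
    · exfalso
      rw [← h, h0] at hy₀
      linarith
  have hTlog : 0 < T * Real.log 2 := mul_pos hT hlog
  have key : ∀ w : ℝ, 0 < w →
      ((2 : ℝ) ^ (T / w) * (T * Real.log 2 / w - 1) = c - 1 ↔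
        F (T * Real.log 2 / w) = c - 1) := by
    intro w hw
    have h2 : (2:ℝ) ^ (T / w) = Real.exp (T * Real.log 2 / w) := by
      rw [Real.rpow_def_of_pos (by norm_num : (0:ℝ) < 2)]
      congr 1
      ring
    simp only [hF, h2]
  set w₀ : ℝ := T * Real.log 2 / y₀ with hw₀def
  have hw₀pos : 0 < w₀ := div_pos hTlog hy₀pos
  have hy₀w₀ : T * Real.log 2 / w₀ = y₀ := by
    rw [hw₀def]
    field_simp
  refine ⟨w₀, ⟨hw₀pos, ?_⟩, ?_⟩
  · rw [key w₀ hw₀pos, hy₀w₀]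
    exact hy₀
  · rintro w ⟨hw, heq⟩
    set y : ℝ := T * Real.log 2 / w with hydef
    have hypos : 0 < y := div_pos hTlog hw
    have hFy : F y = c - 1 := (key w hw).mp heq
    have hyy₀ : y = y₀ :=
      hmono.injOn (Set.mem_Ici.mpr hypos.le) (Set.mem_Ici.mpr hy₀pos.le) (hFy.trans hy₀.symm)
    have : w = T * Real.log 2 / y := by
      rw [hydef]
      field_simp
    rw [this, hyy₀, hw₀def]
end

section
/- (Theorem 1) Let g, N₀, Γ, λ > 0 and let two users have the same attenuation ℓ > 0, traffic demands T₁, T₂ > 0, and positive bandwidths w₁, w₂ each satisfying the stationarity condition 2^{Tᵢ/wᵢ}·(Tᵢ·ln 2 / wᵢ − 1) = λ·ℓ/(g·N₀·Γ) − 1 with the same multiplier λ. Then w₁/T₁ = w₂/T₂ (bandwidth is proportional to traffic demand), and with pᵢ = (g·N₀·Γ/ℓ)·(2^{Tᵢ/wᵢ} − 1)·wᵢ the power spectral densities are equal: p₁/w₁ = p₂/w₂. -/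
/-! The left side of the stationarity condition is `φ(x) = 2^x (x ln 2 - 1)` at `x = T/w`, and
`φ` is strictly increasing on `[0, ∞)` (after `t = x ln 2` its derivative is `t eᵗ`). So a common
multiplier forces `T₁/w₁ = T₂/w₂`, and then `p/w = (g N₀ Γ/ℓ)(2^{T/w} - 1)` agrees as well. -/

open Real Set

theorem hasDerivAt_exp_mul_sub_one (t : ℝ) :
    HasDerivAt (fun t : ℝ => exp t * (t - 1)) (t * exp t) t := by
  have h : HasDerivAt (fun t : ℝ => exp t * (t - 1)) (exp t * (t - 1) + exp t * 1) t :=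
    (hasDerivAt_exp t).mul ((hasDerivAt_id' t).sub_const 1)
  convert h using 1
  ring

theorem strictMonoOn_exp_mul_sub_one :
    StrictMonoOn (fun t : ℝ => exp t * (t - 1)) (Ici 0) := by
  refine strictMonoOn_of_deriv_pos (convex_Ici 0) (by fun_prop) fun t ht => ?_
  rw [interior_Ici] at ht
  rw [(hasDerivAt_exp_mul_sub_one t).deriv]
  exact mul_pos ht (exp_pos t)

theorem injOn_rpow_mul_mul_log_sub_one {b : ℝ} (hb : 1 < b) :
    InjOn (fun x : ℝ => b ^ x * (x * log b - 1)) (Ici 0) := by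
  have hlog : 0 < log b := log_pos hb
  intro x hx y hy hxy
  have hexp : ∀ z : ℝ, b ^ z * (z * log b - 1) = exp (z * log b) * (z * log b - 1) := fun z => by
    rw [rpow_def_of_pos (zero_lt_one.trans hb), mul_comm (log b)]
  simp only [hexp] at hxy
  have hscaled := strictMonoOn_exp_mul_sub_one.injOn (mul_nonneg hx hlog.le)
    (mul_nonneg hy hlog.le) hxy
  exact mul_right_cancel₀ hlog.ne' hscaled

theorem stmt_3_general (g N₀ Γ ℓ lam T₁ T₂ w₁ w₂ : ℝ)
    (hT₁ : 0 < T₁) (hT₂ : 0 < T₂) (hw₁ : 0 < w₁) (hw₂ : 0 < w₂)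
    (hs₁ : (2 : ℝ) ^ (T₁ / w₁) * (T₁ * Real.log 2 / w₁ - 1) = lam * ℓ / (g * N₀ * Γ) - 1)
    (hs₂ : (2 : ℝ) ^ (T₂ / w₂) * (T₂ * Real.log 2 / w₂ - 1) = lam * ℓ / (g * N₀ * Γ) - 1) :
    w₁ / T₁ = w₂ / T₂ ∧
    (g * N₀ * Γ / ℓ * ((2 : ℝ) ^ (T₁ / w₁) - 1) * w₁) / w₁ =
      (g * N₀ * Γ / ℓ * ((2 : ℝ) ^ (T₂ / w₂) - 1) * w₂) / w₂ := by
  rw [mul_div_right_comm] at hs₁ hs₂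
  have hratio : T₁ / w₁ = T₂ / w₂ :=
    injOn_rpow_mul_mul_log_sub_one one_lt_two (div_pos hT₁ hw₁).le (div_pos hT₂ hw₂).le
      (hs₁.trans hs₂.symm)
  refine ⟨?_, ?_⟩
  · rw [← inv_div T₁, ← inv_div T₂, hratio]
  · rw [mul_div_cancel_right₀ _ hw₁.ne', mul_div_cancel_right₀ _ hw₂.ne', hratio]

/-- (Theorem 1) Two users with the same attenuation `ℓ` whose bandwidths satisfy the
stationarity condition with the same multiplier `λ` have bandwidth proportional to
traffic demand, and equal power spectral densities. -/
theorem stmt_3 (g N₀ Γ ℓ lam T₁ T₂ w₁ w₂ : ℝ)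
    (hg : 0 < g) (hN₀ : 0 < N₀) (hΓ : 0 < Γ) (hℓ : 0 < ℓ) (hlam : 0 < lam)
    (hT₁ : 0 < T₁) (hT₂ : 0 < T₂) (hw₁ : 0 < w₁) (hw₂ : 0 < w₂)
    (hs₁ : (2 : ℝ) ^ (T₁ / w₁) * (T₁ * Real.log 2 / w₁ - 1) = lam * ℓ / (g * N₀ * Γ) - 1)
    (hs₂ : (2 : ℝ) ^ (T₂ / w₂) * (T₂ * Real.log 2 / w₂ - 1) = lam * ℓ / (g * N₀ * Γ) - 1) :
    w₁ / T₁ = w₂ / T₂ ∧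
    (g * N₀ * Γ / ℓ * ((2 : ℝ) ^ (T₁ / w₁) - 1) * w₁) / w₁ =
      (g * N₀ * Γ / ℓ * ((2 : ℝ) ^ (T₂ / w₂) - 1) * w₂) / w₂ :=
  stmt_3_general g N₀ Γ ℓ lam T₁ T₂ w₁ w₂ hT₁ hT₂ hw₁ hw₂ hs₁ hs₂
end

section
/- (Lemma 1, bounds) Let g, N₀, Γ > 0, let U be a nonempty finite index set of users with traffic demands T_u > 0 and attenuations ℓ_u satisfying 0 < ℓ_M ≤ ℓ_u ≤ ℓ_m for all u, and let W > 0. Suppose λ > 0 and positive bandwidths (w_u) satisfy, for every u, the stationarity condition 2^{T_u/w_u}·(T_u·ln 2 / w_u − 1) = λ·ℓ_u/(g·N₀·Γ) − 1, together with the constraint Σ_u w_u = W. Then, setting z = (ln 2 / W)·Σ_u T_u − 1, the multiplier satisfies (z·e^{z+1} + 1)·g·N₀·Γ/ℓ_m ≤ λ ≤ (z·e^{z+1} + 1)·g·N₀·Γ/ℓ_M. -/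
open Real Finset

private lemma phi_mono {a b : ℝ} (ha : 0 ≤ a) (hab : a ≤ b) :
    Real.exp a * (a - 1) ≤ Real.exp b * (b - 1) := by
  have hmono : MonotoneOn (fun y => Real.exp y * (y - 1)) (Set.Ici 0) := by
    apply monotoneOn_of_deriv_nonneg (convex_Ici 0)
    · fun_prop
    · intro x hx
      exact ((Real.differentiable_exp x).mul
        ((differentiable_id.sub_const 1) x)).differentiableWithinAt
    · intro x hx
      rw [interior_Ici] at hx
      have h1 : HasDerivAt (fun y => Real.exp y * (y - 1))
          (Real.exp x * (x - 1) + Real.exp x * 1) x :=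
        (Real.hasDerivAt_exp x).mul ((hasDerivAt_id x).sub_const 1)
      rw [h1.deriv]
      nlinarith [Real.exp_pos x, Set.mem_Ioi.mp hx]
  exact hmono ha (le_trans ha hab) hab

/-- (Lemma 1, bounds) If the multiplier `λ > 0` and positive bandwidths `(w_u)` satisfy
the per-user stationarity conditions together with the total bandwidth constraint
`Σ_u w_u = W`, and all attenuations lie in `[ℓ_M, ℓ_m]`, then with
`z = (ln 2 / W)·Σ_u T_u − 1` the multiplier satisfies
`(z·e^{z+1} + 1)·g·N₀·Γ/ℓ_m ≤ λ ≤ (z·e^{z+1} + 1)·g·N₀·Γ/ℓ_M`. -/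
theorem stmt_5 {ι : Type*} (U : Finset ι) (hU : U.Nonempty)
    (g N₀ Γ W lam ℓm ℓM : ℝ) (T ℓ w : ι → ℝ)
    (hg : 0 < g) (hN₀ : 0 < N₀) (hΓ : 0 < Γ) (hW : 0 < W)
    (hT : ∀ u ∈ U, 0 < T u)
    (hℓM : 0 < ℓM) (hℓ : ∀ u ∈ U, ℓM ≤ ℓ u ∧ ℓ u ≤ ℓm)
    (hlam : 0 < lam) (hw : ∀ u ∈ U, 0 < w u)
    (hstat : ∀ u ∈ U,
      (2 : ℝ) ^ (T u / w u) * (T u * Real.log 2 / w u - 1) = lam * ℓ u / (g * N₀ * Γ) - 1)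
    (hsum : ∑ u ∈ U, w u = W) :
    ((Real.log 2 / W * ∑ u ∈ U, T u - 1) *
        Real.exp ((Real.log 2 / W * ∑ u ∈ U, T u - 1) + 1) + 1) * (g * N₀ * Γ) / ℓm ≤ lam ∧
    lam ≤ ((Real.log 2 / W * ∑ u ∈ U, T u - 1) *
        Real.exp ((Real.log 2 / W * ∑ u ∈ U, T u - 1) + 1) + 1) * (g * N₀ * Γ) / ℓM := by

  set c : ℝ := g * N₀ * Γ with hc_def
  have hc : 0 < c := by positivity
  have hl2 : 0 < Real.log 2 := Real.log_pos one_lt_two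
  -- y u = T u * log 2 / w u
  set y : ι → ℝ := fun u => T u * Real.log 2 / w u with hy_def
  have hy_pos : ∀ u ∈ U, 0 < y u := fun u hu => by
    have := hT u hu; have := hw u hu; positivity
  -- stationarity in exp form
  have hstat' : ∀ u ∈ U, Real.exp (y u) * (y u - 1) = lam * ℓ u / c - 1 := by
    intro u hu
    have h2 : (2 : ℝ) ^ (T u / w u) = Real.exp (y u) := by
      rw [Real.rpow_def_of_pos (by norm_num : (0:ℝ) < 2)]
      congr 1; simp only [hy_def]; ring
    have := hstat u hu
    rw [h2] at this
    exact this
  -- z1 = z + 1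
  set z1 : ℝ := Real.log 2 / W * ∑ u ∈ U, T u with hz1_def
  have hz1_pos : 0 < z1 := by
    have hS : 0 < ∑ u ∈ U, T u := Finset.sum_pos hT hU
    positivity
  -- weighted sums
  have hwy : ∑ u ∈ U, w u * y u = W * z1 := by
    have h : ∀ u ∈ U, w u * y u = T u * Real.log 2 := by
      intro u hu
      simp only [hy_def]
      rw [mul_comm]
      exact div_mul_cancel₀ _ (hw u hu).ne'
    rw [Finset.sum_congr rfl h, ← Finset.sum_mul, hz1_def]
    field_simp
  have hwz : ∑ u ∈ U, w u * z1 = W * z1 := by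
    rw [← Finset.sum_mul, hsum]
  -- existence of u with y u ≥ z1
  obtain ⟨u₁, hu₁, hy₁⟩ : ∃ u ∈ U, w u * z1 ≤ w u * y u := by
    by_contra h
    push_neg at h
    have := Finset.sum_lt_sum_of_nonempty hU h
    rw [hwy, hwz] at this
    exact lt_irrefl _ this
  have hy₁' : z1 ≤ y u₁ := le_of_mul_le_mul_left (by linarith [hy₁]) (hw u₁ hu₁)
  -- existence of u with y u ≤ z1
  obtain ⟨u₂, hu₂, hy₂⟩ : ∃ u ∈ U, w u * y u ≤ w u * z1 := by
    by_contra h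
    push_neg at h
    have := Finset.sum_lt_sum_of_nonempty hU h
    rw [hwy, hwz] at this
    exact lt_irrefl _ this
  have hy₂' : y u₂ ≤ z1 := le_of_mul_le_mul_left (by linarith [hy₂]) (hw u₂ hu₂)
  have hkey : ((Real.log 2 / W * ∑ u ∈ U, T u - 1) *
      Real.exp ((Real.log 2 / W * ∑ u ∈ U, T u - 1) + 1) + 1) =
      Real.exp z1 * (z1 - 1) + 1 := by
    rw [show Real.log 2 / W * ∑ u ∈ U, T u = z1 from hz1_def.symm,
      show z1 - 1 + 1 = z1 by ring]
    ring
  have hℓm : 0 < ℓm := lt_of_lt_of_le hℓM ((hℓ u₁ hu₁).1.trans (hℓ u₁ hu₁).2)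
  constructor
  · -- lower bound
    rw [hkey, div_le_iff₀ hℓm]
    have h1 : Real.exp z1 * (z1 - 1) ≤ Real.exp (y u₁) * (y u₁ - 1) :=
      phi_mono hz1_pos.le hy₁'
    rw [hstat' u₁ hu₁] at h1
    have h2 : lam * ℓ u₁ ≤ lam * ℓm := by
      exact mul_le_mul_of_nonneg_left (hℓ u₁ hu₁).2 hlam.le
    have h3 : lam * ℓ u₁ / c ≤ lam * ℓm / c := by gcongr
    have h4 : Real.exp z1 * (z1 - 1) + 1 ≤ lam * ℓm / c := by linarith
    calc (Real.exp z1 * (z1 - 1) + 1) * c ≤ lam * ℓm / c * c := by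
          exact mul_le_mul_of_nonneg_right h4 hc.le
      _ = lam * ℓm := by field_simp
  · -- upper bound
    rw [hkey, le_div_iff₀ hℓM]
    have h1 : Real.exp (y u₂) * (y u₂ - 1) ≤ Real.exp z1 * (z1 - 1) :=
      phi_mono (hy_pos u₂ hu₂).le hy₂'
    rw [hstat' u₂ hu₂] at h1
    have h2 : lam * ℓM ≤ lam * ℓ u₂ :=
      mul_le_mul_of_nonneg_left (hℓ u₂ hu₂).1 hlam.le
    have h3 : lam * ℓM / c ≤ lam * ℓ u₂ / c := by gcongr
    have h4 : lam * ℓM / c ≤ Real.exp z1 * (z1 - 1) + 1 := by linarith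
    calc lam * ℓM = lam * ℓM / c * c := by field_simp
      _ ≤ (Real.exp z1 * (z1 - 1) + 1) * c := mul_le_mul_of_nonneg_right h4 hc.le
end

section
/- (Theorem 2) Let g, N₀, Γ > 0, let a group k of users be a nonempty finite index set with traffic demands T_u > 0 and common attenuation ℓ_k > 0, and write T_k = Σ_u T_u. Given a group bandwidth W_k > 0 and the group power P_k = (g·N₀·Γ/ℓ_k)·(2^{T_k/W_k} − 1)·W_k, define the per-user allocation w_u = W_k·T_u/T_k and p_u = (P_k/W_k)·w_u. Then: (i) Σ_u w_u = W_k and Σ_u p_u = P_k; (ii) for every u, p_u = (g·N₀·Γ/ℓ_k)·(2^{T_u/w_u} − 1)·w_u, i.e. each user's traffic demand is exactly served; (iii) every user has the same power spectral density p_u/w_u = P_k/W_k; and (iv) this allocation is optimal: for any other positive bandwidths (w'_u) with Σ_u w'_u = W_k, the total power Σ_u (g·N₀·Γ/ℓ_k)·(2^{T_u/w'_u} − 1)·w'_u is at least P_k. -/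
open Real Finset

lemma convexOn_two_rpow : ConvexOn ℝ Set.univ (fun x : ℝ => (2 : ℝ) ^ x) := by
  have h : (fun x : ℝ => (2 : ℝ) ^ x) = fun x => Real.exp (Real.log 2 * x) := by
    funext x
    rw [Real.rpow_def_of_pos (by norm_num), mul_comm]
  rw [h]
  refine ⟨convex_univ, fun x _ y _ a b ha hb hab => ?_⟩
  have := convexOn_exp.2 (Set.mem_univ (Real.log 2 * x)) (Set.mem_univ (Real.log 2 * y)) ha hb hab
  simpa [smul_eq_mul, mul_add, add_mul, mul_comm, mul_left_comm, mul_assoc] using this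

/-- (Theorem 2) Given the group solution `(W_k, P_k)` for a group of users with common
attenuation `ℓ_k` and aggregate demand `T_k = Σ_u T_u`, the per-user allocation
`w_u = W_k·T_u/T_k`, `p_u = (P_k/W_k)·w_u` sums to the group allocation, exactly serves
each user's demand, gives every user the same power spectral density `P_k/W_k`, and
minimizes the total power among all positive bandwidth splittings of `W_k`. -/
theorem stmt_8 {ι : Type*} (U : Finset ι) (hU : U.Nonempty)
    (g N₀ Γ ℓk Wk : ℝ) (T : ι → ℝ)
    (hg : 0 < g) (hN₀ : 0 < N₀) (hΓ : 0 < Γ) (hℓk : 0 < ℓk) (hWk : 0 < Wk)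
    (hT : ∀ u ∈ U, 0 < T u)
    (Tk : ℝ) (hTk : Tk = ∑ u ∈ U, T u)
    (Pk : ℝ) (hPk : Pk = g * N₀ * Γ / ℓk * ((2 : ℝ) ^ (Tk / Wk) - 1) * Wk)
    (w p : ι → ℝ)
    (hwdef : ∀ u ∈ U, w u = Wk * T u / Tk)
    (hpdef : ∀ u ∈ U, p u = Pk / Wk * w u) :
    (∑ u ∈ U, w u = Wk ∧ ∑ u ∈ U, p u = Pk) ∧
    (∀ u ∈ U, p u = g * N₀ * Γ / ℓk * ((2 : ℝ) ^ (T u / w u) - 1) * w u) ∧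
    (∀ u ∈ U, p u / w u = Pk / Wk) ∧
    (∀ w' : ι → ℝ, (∀ u ∈ U, 0 < w' u) → ∑ u ∈ U, w' u = Wk →
      Pk ≤ ∑ u ∈ U, g * N₀ * Γ / ℓk * ((2 : ℝ) ^ (T u / w' u) - 1) * w' u) := by
  have hTkpos : 0 < Tk := by
    rw [hTk]; exact Finset.sum_pos hT hU
  have hsumw : ∑ u ∈ U, w u = Wk := by
    rw [Finset.sum_congr rfl hwdef]
    rw [← Finset.sum_div]
    rw [← Finset.mul_sum, ← hTk]
    field_simp
  have hwpos : ∀ u ∈ U, 0 < w u := fun u hu => by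
    have := hT u hu
    rw [hwdef u hu]
    positivity
  have hratio : ∀ u ∈ U, T u / w u = Tk / Wk := fun u hu => by
    have hTu := hT u hu
    rw [hwdef u hu]
    field_simp
  have hsump : ∑ u ∈ U, p u = Pk := by
    rw [Finset.sum_congr rfl hpdef, ← Finset.mul_sum, hsumw]
    field_simp
  refine ⟨⟨hsumw, hsump⟩, ?_, ?_, ?_⟩
  · intro u hu
    rw [hpdef u hu, hratio u hu, hPk]
    field_simp
  · intro u hu
    rw [hpdef u hu]
    field_simp [(hwpos u hu).ne']
  · intro w' hw' hsum
    have hC : 0 < g * N₀ * Γ / ℓk := by positivity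
    -- Jensen
    have hjen : (2 : ℝ) ^ (Tk / Wk) ≤ ∑ u ∈ U, (w' u / Wk) * (2 : ℝ) ^ (T u / w' u) := by
      have h₁ : ∑ u ∈ U, w' u / Wk = 1 := by
        rw [← Finset.sum_div, hsum, div_self hWk.ne']
      have := convexOn_two_rpow.map_sum_le (t := U) (w := fun u => w' u / Wk)
        (p := fun u => T u / w' u) (fun i hi => div_nonneg (hw' i hi).le hWk.le) h₁
        (fun i _ => Set.mem_univ _)
      simp only [smul_eq_mul] at this
      have harg : ∑ u ∈ U, (w' u / Wk) * (T u / w' u) = Tk / Wk := by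
        rw [hTk, Finset.sum_div]
        refine Finset.sum_congr rfl fun u hu => ?_
        field_simp [(hw' u hu).ne']
      rwa [harg] at this
    have key : Wk * ((2 : ℝ) ^ (Tk / Wk) - 1) ≤
        ∑ u ∈ U, w' u * ((2 : ℝ) ^ (T u / w' u) - 1) := by
      have : ∑ u ∈ U, w' u * ((2 : ℝ) ^ (T u / w' u) - 1)
          = (∑ u ∈ U, w' u * (2 : ℝ) ^ (T u / w' u)) - Wk := by
        rw [← hsum, ← Finset.sum_sub_distrib]
        exact Finset.sum_congr rfl fun u hu => by ring
      rw [this]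
      have h2 : Wk * (2 : ℝ) ^ (Tk / Wk) ≤ ∑ u ∈ U, w' u * (2 : ℝ) ^ (T u / w' u) := by
        have := mul_le_mul_of_nonneg_left hjen hWk.le
        rw [Finset.mul_sum] at this
        calc Wk * (2 : ℝ) ^ (Tk / Wk)
            ≤ ∑ u ∈ U, Wk * (w' u / Wk * (2 : ℝ) ^ (T u / w' u)) := this
          _ = ∑ u ∈ U, w' u * (2 : ℝ) ^ (T u / w' u) :=
              Finset.sum_congr rfl fun u hu => by field_simp
      linarith [mul_comm Wk ((2 : ℝ) ^ (Tk / Wk))]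
    calc Pk = g * N₀ * Γ / ℓk * (Wk * ((2 : ℝ) ^ (Tk / Wk) - 1)) := by rw [hPk]; ring
      _ ≤ g * N₀ * Γ / ℓk * ∑ u ∈ U, w' u * ((2 : ℝ) ^ (T u / w' u) - 1) :=
          mul_le_mul_of_nonneg_left key hC.le
      _ = ∑ u ∈ U, g * N₀ * Γ / ℓk * ((2 : ℝ) ^ (T u / w' u) - 1) * w' u := by
          rw [Finset.mul_sum]; exact Finset.sum_congr rfl fun u hu => by ring
end

section
/- (Lemma 2, attainment in the limit) Let g, N₀, Γ > 0 and let U be a nonempty finite index set of users with traffic demands T_u > 0 and attenuations ℓ_u > 0. Along the bandwidth allocations w_u(t) = t·T_u, the total transmit power Σ_u (g·N₀·Γ/ℓ_u)·(2^{T_u/w_u(t)} − 1)·w_u(t) tends to g·N₀·Γ·ln 2 · Σ_u T_u/ℓ_u as t → ∞. Hence the energy efficiency c·(Σ_u T_u)/(total power) tends to the upper bound EE* = c·(Σ_u T_u)/( g·N₀·Γ·ln 2 · Σ_u T_u/ℓ_u ) as the total bandwidth tends to infinity. -/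
open Real Finset Filter

/-! With `w = t·T`, each summand of the power is `(g·N₀·Γ·T/ℓ)·(2^{1/t} − 1)·t`, and
`(2^{1/t} − 1)·t` is the difference quotient of `x ↦ 2^x` at `0` with step `1/t`, so it tends
to the derivative `log 2`. The energy efficiency then converges because the limiting power is
positive. -/

theorem tendsto_rpow_inv_sub_one_mul_atTop {b : ℝ} (hb : 0 < b) :
    Tendsto (fun t : ℝ => (b ^ t⁻¹ - 1) * t) atTop (nhds (log b)) := by
  have hderiv : HasDerivAt (fun x : ℝ => b ^ x) (log b) 0 := by
    simpa using (hasStrictDerivAt_const_rpow hb 0).hasDerivAt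
  convert hderiv.tendsto_slope_zero_right.comp tendsto_inv_atTop_nhdsGT_zero using 1
  ext t
  simp only [Function.comp_apply, inv_inv, zero_add, rpow_zero, smul_eq_mul]
  ring

theorem tendsto_rpow_div_sub_one_mul_atTop {b : ℝ} (hb : 0 < b) (a : ℝ) :
    Tendsto (fun t : ℝ => (b ^ (a / (t * a)) - 1) * (t * a)) atTop (nhds (a * log b)) := by
  rcases eq_or_ne a 0 with rfl | ha
  · simp -- with `0 / 0 = 0` the function is identically zero
  · convert (tendsto_rpow_inv_sub_one_mul_atTop hb).const_mul a using 2 with t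
    rw [mul_comm t a, div_mul_cancel_left₀ ha]
    ring

theorem stmt_14_general {ι : Type*} (U : Finset ι) (hU : U.Nonempty)
    (g N₀ Γ c : ℝ) (T ℓ : ι → ℝ)
    (hg : 0 < g) (hN₀ : 0 < N₀) (hΓ : 0 < Γ)
    (hT : ∀ u ∈ U, 0 < T u) (hℓ : ∀ u ∈ U, 0 < ℓ u) :
    Tendsto
      (fun t : ℝ =>
        ∑ u ∈ U, g * N₀ * Γ / ℓ u * ((2 : ℝ) ^ (T u / (t * T u)) - 1) * (t * T u))
      atTop (nhds (g * N₀ * Γ * Real.log 2 * ∑ u ∈ U, T u / ℓ u)) ∧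
    Tendsto
      (fun t : ℝ =>
        c * (∑ u ∈ U, T u) /
          (∑ u ∈ U, g * N₀ * Γ / ℓ u * ((2 : ℝ) ^ (T u / (t * T u)) - 1) * (t * T u)))
      atTop
      (nhds (c * (∑ u ∈ U, T u) / (g * N₀ * Γ * Real.log 2 * ∑ u ∈ U, T u / ℓ u))) := by
  have hpower : Tendsto
      (fun t : ℝ =>
        ∑ u ∈ U, g * N₀ * Γ / ℓ u * ((2 : ℝ) ^ (T u / (t * T u)) - 1) * (t * T u))
      atTop (nhds (g * N₀ * Γ * Real.log 2 * ∑ u ∈ U, T u / ℓ u)) := by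
    have hlimit : g * N₀ * Γ * Real.log 2 * ∑ u ∈ U, T u / ℓ u
        = ∑ u ∈ U, g * N₀ * Γ / ℓ u * (T u * Real.log 2) := by
      rw [mul_sum]
      exact sum_congr rfl fun u _ => by ring
    rw [hlimit]
    refine tendsto_finsetSum _ fun u _ => ?_
    simpa only [mul_assoc] using
      (tendsto_rpow_div_sub_one_mul_atTop two_pos (T u)).const_mul (g * N₀ * Γ / ℓ u)
  have hsum : 0 < ∑ u ∈ U, T u / ℓ u := sum_pos (fun u hu => div_pos (hT u hu) (hℓ u hu)) hU
  have hbound : 0 < g * N₀ * Γ * Real.log 2 * ∑ u ∈ U, T u / ℓ u := by positivity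
  exact ⟨hpower, tendsto_const_nhds.div hpower hbound.ne'⟩

/-- (Lemma 2, attainment in the limit) Along the bandwidth allocations `w_u(t) = t·T_u`,
the total transmit power tends to `g·N₀·Γ·ln 2 · Σ_u T_u/ℓ_u` as `t → ∞`, and hence
the energy efficiency tends to the upper bound
`EE* = c·(Σ_u T_u)/(g·N₀·Γ·ln 2 · Σ_u T_u/ℓ_u)`. -/
theorem stmt_14 {ι : Type*} (U : Finset ι) (hU : U.Nonempty)
    (g N₀ Γ c : ℝ) (T ℓ : ι → ℝ)
    (hg : 0 < g) (hN₀ : 0 < N₀) (hΓ : 0 < Γ) (hc : 0 < c)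
    (hT : ∀ u ∈ U, 0 < T u) (hℓ : ∀ u ∈ U, 0 < ℓ u) :
    Tendsto
      (fun t : ℝ =>
        ∑ u ∈ U, g * N₀ * Γ / ℓ u * ((2 : ℝ) ^ (T u / (t * T u)) - 1) * (t * T u))
      atTop (nhds (g * N₀ * Γ * Real.log 2 * ∑ u ∈ U, T u / ℓ u)) ∧
    Tendsto
      (fun t : ℝ =>
        c * (∑ u ∈ U, T u) /
          (∑ u ∈ U, g * N₀ * Γ / ℓ u * ((2 : ℝ) ^ (T u / (t * T u)) - 1) * (t * T u)))
      atTop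
      (nhds (c * (∑ u ∈ U, T u) / (g * N₀ * Γ * Real.log 2 * ∑ u ∈ U, T u / ℓ u))) :=
  stmt_14_general U hU g N₀ Γ c T ℓ hg hN₀ hΓ hT hℓ
end
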